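/- arXiv:1904.02588 — 6 statements merged into one kernel-verified Lean document; each statement's English description precedes it below -/
import Mathlib

section
/- The function x ↦ (1/2)·Φ_S'(x)² + U(Φ_S(x)) is Lebesgue integrable on ℝ and ∫_ℝ [(1/2)·Φ_S'(x)² + U(Φ_S(x))] dx = 4m³/(3g²); this value M_cl = 4m³/(3g²) is the classical rest mass of the soliton. -/
open MeasureTheory Real Filter Set

/-- Derivative of `tanh`. -/
lemma hasDerivAt_tanh' (x : ℝ) :
    HasDerivAt Real.tanh (1 / Real.cosh x ^ 2) x := by
  have h : HasDerivAt (fun y => Real.sinh y / Real.cosh y)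
      ((Real.cosh x * Real.cosh x - Real.sinh x * Real.sinh x) / Real.cosh x ^ 2) x :=
    (Real.hasDerivAt_sinh x).div (Real.hasDerivAt_cosh x) (Real.cosh_pos x).ne'
  have e : (Real.cosh x * Real.cosh x - Real.sinh x * Real.sinh x) / Real.cosh x ^ 2
      = 1 / Real.cosh x ^ 2 := by
    have := Real.cosh_sq_sub_sinh_sq x
    rw [show Real.cosh x * Real.cosh x - Real.sinh x * Real.sinh x
        = Real.cosh x ^ 2 - Real.sinh x ^ 2 by ring, this]
  rw [e] at h
  exact h.congr_of_eventuallyEq (Filter.Eventually.of_forall fun y =>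
    (Real.tanh_eq_sinh_div_cosh y))

lemma tanh_sq' (x : ℝ) : Real.tanh x ^ 2 = 1 - 1 / Real.cosh x ^ 2 := by
  have hc : Real.cosh x ≠ 0 := (Real.cosh_pos x).ne'
  have h := Real.cosh_sq_sub_sinh_sq x
  rw [Real.tanh_eq_sinh_div_cosh]
  field_simp
  nlinarith [h]

lemma tanh_repr (x : ℝ) :
    Real.tanh x = (1 - Real.exp (-(2 * x))) / (1 + Real.exp (-(2 * x))) := by
  have hu : Real.exp x ≠ 0 := (Real.exp_pos x).ne'
  have h1 : Real.exp (-x) = (Real.exp x)⁻¹ := Real.exp_neg x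
  have h2 : Real.exp (-(2 * x)) = ((Real.exp x) ^ 2)⁻¹ := by
    rw [show -(2 * x) = -x + -x by ring, Real.exp_add, h1]; ring
  rw [Real.tanh_eq_sinh_div_cosh, Real.sinh_eq, Real.cosh_eq, h1, h2]
  have hpos : (0:ℝ) < 1 + ((Real.exp x) ^ 2)⁻¹ := by positivity
  field_simp

lemma tanh_tendsto_top : Tendsto Real.tanh atTop (nhds 1) := by
  have h0 : Tendsto (fun x : ℝ => Real.exp (-(2 * x))) atTop (nhds 0) := by
    have : Tendsto (fun x : ℝ => 2 * x) atTop atTop :=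
      Filter.tendsto_id.const_mul_atTop two_pos
    exact Real.tendsto_exp_neg_atTop_nhds_zero.comp this
  have hd : Tendsto (fun x : ℝ => (1 - Real.exp (-(2 * x))) / (1 + Real.exp (-(2 * x))))
      atTop (nhds ((1 - 0) / (1 + 0))) :=
    Tendsto.div (tendsto_const_nhds.sub h0) (tendsto_const_nhds.add h0) (by norm_num)
  norm_num at hd
  exact Tendsto.congr (fun x => (tanh_repr x).symm) hd

lemma tanh_tendsto_bot : Tendsto Real.tanh atBot (nhds (-1)) := by
  have h := tanh_tendsto_top.comp tendsto_neg_atBot_atTop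
  have : Tendsto (fun x : ℝ => -Real.tanh (-x)) atBot (nhds (-1)) := by
    simpa using h.neg
  exact Tendsto.congr (fun x => by simp [Real.tanh_neg]) this

/-- The energy density of the kink `Φ_S(x) = (m/g)·tanh(m·x)`, namely
`(1/2)·Φ_S'(x)² + U(Φ_S(x))` with `U(φ) = (g²/2)(φ² − m²/g²)²`, is Lebesgue
integrable on `ℝ` and its integral equals the classical soliton rest mass
`M_cl = 4m³/(3g²)`. -/
theorem kink_classical_mass (m g : ℝ) (hm : 0 < m) (hg : 0 < g) :
    Integrable (fun x : ℝ =>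
      (1 / 2) * (deriv (fun y : ℝ => (m / g) * Real.tanh (m * y)) x) ^ 2
        + (g ^ 2 / 2) * (((m / g) * Real.tanh (m * x)) ^ 2 - m ^ 2 / g ^ 2) ^ 2) ∧
    (∫ x : ℝ,
      ((1 / 2) * (deriv (fun y : ℝ => (m / g) * Real.tanh (m * y)) x) ^ 2
        + (g ^ 2 / 2) * (((m / g) * Real.tanh (m * x)) ^ 2 - m ^ 2 / g ^ 2) ^ 2))
      = 4 * m ^ 3 / (3 * g ^ 2) := by
  set c : ℝ := m ^ 4 / g ^ 2 with hc
  -- the energy density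
  set E : ℝ → ℝ := fun x => c * (1 / Real.cosh (m * x) ^ 2) ^ 2 with hE
  have hcoshne : ∀ x : ℝ, Real.cosh x ≠ 0 := fun x => (Real.cosh_pos x).ne'
  -- derivative of the kink profile
  have hder : ∀ x : ℝ, deriv (fun y : ℝ => (m / g) * Real.tanh (m * y)) x
      = (m / g) * (m * (1 / Real.cosh (m * x) ^ 2)) := by
    intro x
    have h1 : HasDerivAt (fun y : ℝ => Real.tanh (m * y))
        ((1 / Real.cosh (m * x) ^ 2) * m) x := by
      have := (hasDerivAt_tanh' (m * x)).comp x ((hasDerivAt_id x).const_mul m)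
      simpa [Function.comp_def] using this
    have h2 := h1.const_mul (m / g)
    rw [h2.deriv]; ring
  -- the integrand equals E
  have hEq : ∀ x : ℝ,
      (1 / 2) * (deriv (fun y : ℝ => (m / g) * Real.tanh (m * y)) x) ^ 2
        + (g ^ 2 / 2) * (((m / g) * Real.tanh (m * x)) ^ 2 - m ^ 2 / g ^ 2) ^ 2 = E x := by
    intro x
    rw [hder x]
    have ht := tanh_sq' (m * x)
    have hcx := hcoshne (m * x)
    simp only [hE, hc, mul_pow]
    rw [ht]
    field_simp
    ring
  -- antiderivative
  set F : ℝ → ℝ := fun x => (c / m) * (Real.tanh (m * x) - Real.tanh (m * x) ^ 3 / 3) with hF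
  have hFder : ∀ x : ℝ, HasDerivAt F (E x) x := by
    intro x
    have h1 : HasDerivAt (fun y : ℝ => Real.tanh (m * y))
        ((1 / Real.cosh (m * x) ^ 2) * m) x := by
      have := (hasDerivAt_tanh' (m * x)).comp x ((hasDerivAt_id x).const_mul m)
      simpa [Function.comp_def] using this
    have h2 : HasDerivAt (fun y : ℝ => Real.tanh (m * y) ^ 3)
        (3 * Real.tanh (m * x) ^ 2 * ((1 / Real.cosh (m * x) ^ 2) * m)) x := by
      have := h1.pow 3
      simpa [Pi.pow_def] using this
    have h3 := ((h1.sub (h2.div_const 3)).const_mul (c / m))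
    have e : (c / m) * ((1 / Real.cosh (m * x) ^ 2) * m
        - 3 * Real.tanh (m * x) ^ 2 * ((1 / Real.cosh (m * x) ^ 2) * m) / 3) = E x := by
      have ht := tanh_sq' (m * x)
      have hcx := hcoshne (m * x)
      simp only [hE]
      rw [ht]
      field_simp
      ring
    rw [e] at h3
    exact h3
  have hEnonneg : ∀ x : ℝ, 0 ≤ E x := by
    intro x; simp only [hE]; positivity
  -- limits of F
  have hmtop : Tendsto (fun x : ℝ => m * x) atTop atTop :=
    Filter.tendsto_id.const_mul_atTop hm
  have hmbot : Tendsto (fun x : ℝ => m * x) atBot atBot :=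
    Filter.tendsto_id.const_mul_atBot hm
  have hFtop : Tendsto F atTop (nhds ((c / m) * (2 / 3))) := by
    have h := tanh_tendsto_top.comp hmtop
    have : Tendsto (fun x : ℝ => (c / m) * (Real.tanh (m * x) - Real.tanh (m * x) ^ 3 / 3))
        atTop (nhds ((c / m) * (1 - 1 ^ 3 / 3))) :=
      ((h.sub ((h.pow 3).div_const 3)).const_mul _)
    simpa [hF] using this.congr (fun x => rfl) |>.mono_right (by norm_num)
  have hFbot : Tendsto F atBot (nhds (-((c / m) * (2 / 3)))) := by
    have h := tanh_tendsto_bot.comp hmbot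
    have : Tendsto (fun x : ℝ => (c / m) * (Real.tanh (m * x) - Real.tanh (m * x) ^ 3 / 3))
        atBot (nhds ((c / m) * ((-1) - (-1) ^ 3 / 3))) :=
      ((h.sub ((h.pow 3).div_const 3)).const_mul _)
    simpa [hF] using this.mono_right (by norm_num)
  -- integrability of E
  have hIoi : IntegrableOn E (Ioi 0) := by
    refine integrableOn_Ioi_deriv_of_nonneg' (fun x _ => hFder x) (fun x _ => hEnonneg x) hFtop
  have hEeven : ∀ x : ℝ, E (-x) = E x := by
    intro x; simp only [hE, mul_neg, Real.cosh_neg]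
  have hIci : IntegrableOn E (Ici 0) := by
    rwa [integrableOn_Ici_iff_integrableOn_Ioi]
  have hIic : IntegrableOn E (Iic 0) := by
    have A : MeasurableEmbedding fun x : ℝ => -x :=
      (Homeomorph.neg ℝ).isClosedEmbedding.measurableEmbedding
    have h1 : (volume : Measure ℝ) = Measure.map (fun x : ℝ => -x) volume := by
      simp [Measure.map_neg_eq_self]
    unfold IntegrableOn
    rw [h1, MeasurableEmbedding.restrict_map A, show (fun x : ℝ => -x) ⁻¹' (Iic 0) = Ici 0 by
      ext x; simp, A.integrable_map_iff]
    rw [show (E ∘ fun x : ℝ => -x) = E from funext fun x => hEeven x]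
    exact hIci
  have hInt : Integrable E := by
    have := hIic.union hIoi
    rwa [Set.Iic_union_Ioi, integrableOn_univ] at this
  have hIntegral : ∫ x : ℝ, E x = 4 * m ^ 3 / (3 * g ^ 2) := by
    rw [MeasureTheory.integral_of_hasDerivAt_of_tendsto hFder hInt hFbot hFtop]
    have : (c / m) * (2 / 3) - (-((c / m) * (2 / 3))) = 4 * m ^ 3 / (3 * g ^ 2) := by
      simp only [hc]
      field_simp
      ring
    exact this
  constructor
  · exact hInt.congr (Filter.EventuallyEq.of_eq (funext fun x => (hEq x).symm))
  · rw [show (fun x : ℝ =>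
      (1 / 2) * (deriv (fun y : ℝ => (m / g) * Real.tanh (m * y)) x) ^ 2
        + (g ^ 2 / 2) * (((m / g) * Real.tanh (m * x)) ^ 2 - m ^ 2 / g ^ 2) ^ 2) = E
      from funext hEq]
    exact hIntegral
end

section
/- For every u ∈ ℝ with |u| < 1 and every x₀ ∈ ℝ, the function φ(t,x) = Φ_S((x − u·t − x₀)/√(1 − u²)) solves the classical field equation ∂²φ/∂t² − ∂²φ/∂x² + 2g²·φ·(φ² − m²/g²) = 0 at every point (t,x) ∈ ℝ²; i.e. the Lorentz-boosted kink is an exact travelling-wave solution of the equations of motion. -/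
lemma hasDerivAt_tanh (y : ℝ) :
    HasDerivAt Real.tanh (1 - Real.tanh y ^ 2) y := by
  have h := (Real.hasDerivAt_sinh y).div (Real.hasDerivAt_cosh y)
    (ne_of_gt (Real.cosh_pos y))
  have hc := Real.cosh_pos y
  have heq : (Real.cosh y * Real.cosh y - Real.sinh y * Real.sinh y) / Real.cosh y ^ 2
      = 1 - Real.tanh y ^ 2 := by
    rw [Real.tanh_eq_sinh_div_cosh]
    field_simp
  have hfun : (fun x => Real.sinh x / Real.cosh x) = Real.tanh := by
    funext x; rw [Real.tanh_eq_sinh_div_cosh]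
  rw [show (Real.sinh / Real.cosh) = (fun x => Real.sinh x / Real.cosh x) from rfl, hfun, heq] at h
  exact h

lemma inner_hasDerivAt (c A B : ℝ) (s : ℝ) :
    HasDerivAt (fun s : ℝ => c * Real.tanh (A * s + B))
      (c * (A * (1 - Real.tanh (A * s + B) ^ 2))) s := by
  have h1 : HasDerivAt (fun s : ℝ => A * s + B) A s := by
    simpa using ((hasDerivAt_id s).const_mul A).add_const B
  have h2 := (hasDerivAt_tanh (A * s + B)).comp s h1
  simpa [mul_comm, mul_left_comm] using h2.const_mul c

lemma second_deriv_tanh (c A B : ℝ) (t : ℝ) :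
    deriv (deriv (fun s : ℝ => c * Real.tanh (A * s + B))) t
      = -2 * c * A ^ 2 * Real.tanh (A * t + B) * (1 - Real.tanh (A * t + B) ^ 2) := by
  have hd1 : deriv (fun s : ℝ => c * Real.tanh (A * s + B))
      = fun s => c * (A * (1 - Real.tanh (A * s + B) ^ 2)) := by
    funext s; exact (inner_hasDerivAt c A B s).deriv
  rw [hd1]
  have h1 : HasDerivAt (fun s : ℝ => A * s + B) A t := by
    simpa using ((hasDerivAt_id t).const_mul A).add_const B
  have h2 : HasDerivAt (fun s : ℝ => Real.tanh (A * s + B))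
      ((1 - Real.tanh (A * t + B) ^ 2) * A) t := by
    have := (hasDerivAt_tanh (A * t + B)).comp t h1; exact this
  have h3 : HasDerivAt (fun s : ℝ => c * (A * (1 - Real.tanh (A * s + B) ^ 2)))
      (c * (A * (-(2 * Real.tanh (A * t + B) * ((1 - Real.tanh (A * t + B) ^ 2) * A))))) t := by
    have h4 : HasDerivAt (fun s : ℝ => 1 - Real.tanh (A * s + B) ^ 2)
        (-(2 * Real.tanh (A * t + B) * ((1 - Real.tanh (A * t + B) ^ 2) * A))) t := by
      have := ((h2.pow 2).const_sub 1)
      simpa [pow_one, mul_comm, mul_left_comm, mul_assoc] using this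
    exact (h4.const_mul A).const_mul c
  rw [h3.deriv]; ring

/-- The Lorentz-boosted kink `φ(t,x) = Φ_S((x − u·t − x₀)/√(1 − u²))`, where
`Φ_S(y) = (m/g)·tanh(m·y)`, is an exact travelling-wave solution of the classical
field equation `∂²φ/∂t² − ∂²φ/∂x² + 2g²·φ·(φ² − m²/g²) = 0` for every speed
`|u| < 1` and every offset `x₀`. -/
theorem boosted_kink_solves_field_equation (m g : ℝ) (hm : 0 < m) (hg : 0 < g)
    (u x₀ : ℝ) (hu : |u| < 1) (t x : ℝ) :
    deriv (deriv (fun s : ℝ =>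
        (m / g) * Real.tanh (m * ((x - u * s - x₀) / Real.sqrt (1 - u ^ 2))))) t
      - deriv (deriv (fun y : ℝ =>
        (m / g) * Real.tanh (m * ((y - u * t - x₀) / Real.sqrt (1 - u ^ 2))))) x
      + 2 * g ^ 2 * ((m / g) * Real.tanh (m * ((x - u * t - x₀) / Real.sqrt (1 - u ^ 2)))) *
        (((m / g) * Real.tanh (m * ((x - u * t - x₀) / Real.sqrt (1 - u ^ 2)))) ^ 2
          - m ^ 2 / g ^ 2)
      = 0 := by
  set a := Real.sqrt (1 - u ^ 2) with ha_def
  have hu2 : 0 < 1 - u ^ 2 := by nlinarith [abs_nonneg u, sq_abs u, hu]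
  have ha2 : a ^ 2 = 1 - u ^ 2 := Real.sq_sqrt hu2.le
  have ha0 : a ≠ 0 := by positivity
  have hf1 : (fun s : ℝ => (m / g) * Real.tanh (m * ((x - u * s - x₀) / a)))
      = fun s : ℝ => (m / g) * Real.tanh ((-(m * u) / a) * s + m * (x - x₀) / a) := by
    funext s; congr 1; ring
  have hf2 : (fun y : ℝ => (m / g) * Real.tanh (m * ((y - u * t - x₀) / a)))
      = fun y : ℝ => (m / g) * Real.tanh ((m / a) * y + m * (-(u * t) - x₀) / a) := by
    funext y; congr 1; ring
  rw [hf1, hf2, second_deriv_tanh, second_deriv_tanh]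
  have hz1 : (-(m * u) / a) * t + m * (x - x₀) / a = m * ((x - u * t - x₀) / a) := by ring
  have hz2 : (m / a) * x + m * (-(u * t) - x₀) / a = m * ((x - u * t - x₀) / a) := by ring
  rw [hz1, hz2]
  set T := Real.tanh (m * ((x - u * t - x₀) / a))
  have k1 : (-(m * u) / a) ^ 2 = m ^ 2 * u ^ 2 / (1 - u ^ 2) := by
    rw [div_pow, ha2]; ring_nf
  have k2 : (m / a) ^ 2 = m ^ 2 / (1 - u ^ 2) := by
    rw [div_pow, ha2]
  rw [k1, k2]
  field_simp
  ring
end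

section
/- Let φ : ℝ → ℝ be continuously differentiable, suppose the function x ↦ (1/2)·φ'(x)² + U(φ(x)) is Lebesgue integrable on ℝ, and suppose φ(x) → m/g as x → +∞ and φ(x) → −m/g as x → −∞. Then ∫_ℝ [(1/2)·φ'(x)² + U(φ(x))] dx ≥ 4m³/(3g²). In particular the kink Φ_S minimizes the energy among finite-energy configurations interpolating between the two vacua ±m/g. -/
open MeasureTheory Filter

/-- Energy lower bound in the kink sector: any `C¹` finite-energy configuration
`φ` interpolating between the two vacua `−m/g` (at `−∞`) and `m/g` (at `+∞`)
has energy at least the classical soliton mass `4m³/(3g²)`.  Here the energy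
density is `(1/2)·φ'(x)² + U(φ(x))` with `U(φ) = (g²/2)(φ² − m²/g²)²`. -/
theorem kink_energy_minimizer (m g : ℝ) (hm : 0 < m) (hg : 0 < g) (φ : ℝ → ℝ)
    (hφ : ContDiff ℝ 1 φ)
    (hint : Integrable (fun x : ℝ =>
      (1 / 2) * (deriv φ x) ^ 2 + (g ^ 2 / 2) * ((φ x) ^ 2 - m ^ 2 / g ^ 2) ^ 2))
    (htop : Tendsto φ atTop (nhds (m / g)))
    (hbot : Tendsto φ atBot (nhds (-(m / g)))) :
    4 * m ^ 3 / (3 * g ^ 2) ≤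
      ∫ x : ℝ, ((1 / 2) * (deriv φ x) ^ 2
        + (g ^ 2 / 2) * ((φ x) ^ 2 - m ^ 2 / g ^ 2) ^ 2) := by
  -- superpotential W(y) = g (m²/g² y − y³/3), f = W ∘ φ
  set W : ℝ → ℝ := fun y => g * (m ^ 2 / g ^ 2 * y - y ^ 3 / 3) with hW
  set f : ℝ → ℝ := fun x => W (φ x) with hf
  set f' : ℝ → ℝ := fun x => g * deriv φ x * (m ^ 2 / g ^ 2 - (φ x) ^ 2) with hf'
  have hφdiff : Differentiable ℝ φ := hφ.differentiable one_ne_zero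
  have hderiv : ∀ x, HasDerivAt f (f' x) x := by
    intro x
    have h1 : HasDerivAt φ (deriv φ x) x := (hφdiff x).hasDerivAt
    have : HasDerivAt (fun x => g * (m ^ 2 / g ^ 2 * φ x - (φ x) ^ 3 / 3))
        (g * (m ^ 2 / g ^ 2 * deriv φ x - 3 * (φ x) ^ 2 * deriv φ x / 3)) x := by
      exact (((h1.const_mul (m ^ 2 / g ^ 2)).sub
        (((h1.pow 3)).div_const 3)).const_mul g)
    convert this using 1
    simp only [hf']
    ring
  -- pointwise bound |f'| ≤ energy density
  have hbound : ∀ x, |f' x| ≤ (1 / 2) * (deriv φ x) ^ 2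
      + (g ^ 2 / 2) * ((φ x) ^ 2 - m ^ 2 / g ^ 2) ^ 2 := by
    intro x
    obtain ⟨a, ha⟩ : ∃ a, deriv φ x = a := ⟨_, rfl⟩
    obtain ⟨b, hb⟩ : ∃ b, (φ x) ^ 2 - m ^ 2 / g ^ 2 = b := ⟨_, rfl⟩
    have : f' x = -(g * a * b) := by
      simp only [hf']; rw [ha, ← hb]; ring
    rw [this, ha, hb, abs_neg, abs_le]
    constructor <;> nlinarith [sq_nonneg (a - g * b), sq_nonneg (a + g * b)]
  -- measurability of f'
  have hderivcont : Continuous (deriv φ) := (hφ.iterate_deriv' 0 1).continuous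
  have hf'cont : Continuous f' :=
    (continuous_const.mul hderivcont).mul
      (continuous_const.sub (hφ.continuous.pow 2))
  have hf'int : Integrable f' :=
    hint.mono hf'cont.aestronglyMeasurable (by
      filter_upwards with x
      rw [Real.norm_eq_abs, Real.norm_eq_abs]
      exact (hbound x).trans (le_abs_self _))
  -- limits of f
  have hWc : Continuous W := by continuity
  have htop' : Tendsto f atTop (nhds (W (m / g))) := (hWc.tendsto _).comp htop
  have hbot' : Tendsto f atBot (nhds (W (-(m / g)))) := (hWc.tendsto _).comp hbot
  have hint' : ∫ x, f' x = W (m / g) - W (-(m / g)) :=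
    integral_of_hasDerivAt_of_tendsto hderiv hf'int hbot' htop'
  have hval : W (m / g) - W (-(m / g)) = 4 * m ^ 3 / (3 * g ^ 2) := by
    simp only [hW]
    field_simp
    ring
  have hmono : ∫ x, f' x ≤ ∫ x : ℝ, ((1 / 2) * (deriv φ x) ^ 2
      + (g ^ 2 / 2) * ((φ x) ^ 2 - m ^ 2 / g ^ 2) ^ 2) := by
    apply integral_mono hf'int hint
    intro x
    exact (le_abs_self _).trans (hbound x)
  rw [hint', hval] at hmono
  exact hmono
end

section
/- For every k ∈ ℝ and every x ∈ ℝ, the complex-valued generalized eigenfunction E_k satisfies −∂²_x E_k(x) + 4m²·E_k(x) − 6m²·sech²(m x)·E_k(x) = (k² + 4m²)·E_k(x). -/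
noncomputable def sech (x : ℝ) : ℝ := 1 / Real.cosh x

/-- Normalization phase factor `c(k)` of the generalized eigenfunctions. -/
noncomputable def cNorm (m k : ℝ) : ℂ :=
  if 0 ≤ k then -(k : ℂ) ^ 2 - 3 * Complex.I * (m : ℂ) * (k : ℂ) + 2 * (m : ℂ) ^ 2
  else -(k : ℂ) ^ 2 + 3 * Complex.I * (m : ℂ) * (k : ℂ) + 2 * (m : ℂ) ^ 2

/-- Generalized eigenfunction `E_k` of the linearized operator about the kink. -/
noncomputable def genEig (m k : ℝ) (x : ℝ) : ℂ :=
  cNorm m k *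
    (-(k : ℂ) ^ 2 - 3 * Complex.I * (m : ℂ) * (k : ℂ) * (Real.tanh (m * x) : ℂ)
      + 2 * (m : ℂ) ^ 2 - 3 * (m : ℂ) ^ 2 * (sech (m * x) : ℂ) ^ 2) *
    Complex.exp (Complex.I * (k : ℂ) * (x : ℂ)) /
    (((k : ℂ) ^ 2 + (m : ℂ) ^ 2) * ((k : ℂ) ^ 2 + 4 * (m : ℂ) ^ 2))

lemma sech_sq (y : ℝ) : sech y ^ 2 = 1 - Real.tanh y ^ 2 := by
  have hc := Real.cosh_pos y
  rw [sech, Real.tanh_eq_sinh_div_cosh]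
  field_simp
  linarith [Real.cosh_sq_sub_sinh_sq y]

lemma sech_sq_C (y : ℝ) :
    ((sech y : ℝ) : ℂ) ^ 2 = 1 - ((Real.tanh y : ℝ) : ℂ) ^ 2 := by
  rw [← Complex.ofReal_pow, sech_sq, Complex.ofReal_sub, Complex.ofReal_one,
    Complex.ofReal_pow]

lemma hasDerivAt_tanhC (m x : ℝ) :
    HasDerivAt (fun y : ℝ => (Real.tanh (m * y) : ℂ))
      ((m : ℂ) * (1 - (Real.tanh (m * x) : ℂ) ^ 2)) x := by
  have hc := (Real.cosh_pos (m * x)).ne'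
  have hmul : HasDerivAt (fun y : ℝ => m * y) m x := by
    simpa using (hasDerivAt_id x).const_mul m
  have hs : HasDerivAt (fun y : ℝ => Real.sinh (m * y)) (Real.cosh (m * x) * m) x :=
    (Real.hasDerivAt_sinh (m * x)).comp x hmul
  have hco : HasDerivAt (fun y : ℝ => Real.cosh (m * y)) (Real.sinh (m * x) * m) x :=
    (Real.hasDerivAt_cosh (m * x)).comp x hmul
  have hdiv := hs.div hco hc
  have ht : HasDerivAt (fun y : ℝ => Real.tanh (m * y))
      (m * (1 - Real.tanh (m * x) ^ 2)) x := by
    have heq : (fun y : ℝ => Real.sinh (m * y) / Real.cosh (m * y))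
        = fun y : ℝ => Real.tanh (m * y) := by
      funext y; rw [Real.tanh_eq_sinh_div_cosh]
    rw [show ((fun y : ℝ => Real.sinh (m * y)) / fun y : ℝ => Real.cosh (m * y))
        = fun y : ℝ => Real.sinh (m * y) / Real.cosh (m * y) from rfl, heq] at hdiv
    refine hdiv.congr_deriv ?_
    symm
    rw [Real.tanh_eq_sinh_div_cosh]
    have h1 : Real.cosh (m*x) ^ 2 - Real.sinh (m*x) ^2 = 1 := Real.cosh_sq_sub_sinh_sq _
    field_simp
  have := ht.ofReal_comp
  convert this using 1
  push_cast
  ring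

/-- Auxiliary family: cubic polynomial in `tanh (m x)` times a plane wave. -/
noncomputable def cubWave (m k : ℝ) (a b c d : ℂ) (x : ℝ) : ℂ :=
  (a * (Real.tanh (m * x) : ℂ) ^ 3 + b * (Real.tanh (m * x) : ℂ) ^ 2
    + c * (Real.tanh (m * x) : ℂ) + d) * Complex.exp (Complex.I * (k : ℂ) * (x : ℂ))

lemma hasDerivAt_expC (k x : ℝ) :
    HasDerivAt (fun y : ℝ => Complex.exp (Complex.I * (k : ℂ) * (y : ℂ)))
      (Complex.I * (k : ℂ) * Complex.exp (Complex.I * (k : ℂ) * (x : ℂ))) x := by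
  have h1 : HasDerivAt (fun y : ℝ => ((y : ℝ) : ℂ)) 1 x := (hasDerivAt_id x).ofReal_comp
  have h2 := (h1.const_mul (Complex.I * (k : ℂ)))
  have h3 := h2.cexp
  simpa [mul_comm] using h3

lemma hasDerivAt_cubWave (m k : ℝ) (a b c d : ℂ) (x : ℝ) :
    HasDerivAt (cubWave m k a b c d)
      (((3 * a * (Real.tanh (m * x) : ℂ) ^ 2 + 2 * b * (Real.tanh (m * x) : ℂ) + c)
          * ((m : ℂ) * (1 - (Real.tanh (m * x) : ℂ) ^ 2))
        + Complex.I * (k : ℂ) *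
          (a * (Real.tanh (m * x) : ℂ) ^ 3 + b * (Real.tanh (m * x) : ℂ) ^ 2
            + c * (Real.tanh (m * x) : ℂ) + d))
        * Complex.exp (Complex.I * (k : ℂ) * (x : ℂ))) x := by
  have hT := hasDerivAt_tanhC m x
  have hP : HasDerivAt (fun y : ℝ =>
      a * (Real.tanh (m * y) : ℂ) ^ 3 + b * (Real.tanh (m * y) : ℂ) ^ 2
        + c * (Real.tanh (m * y) : ℂ) + d)
      ((3 * a * (Real.tanh (m * x) : ℂ) ^ 2 + 2 * b * (Real.tanh (m * x) : ℂ) + c)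
        * ((m : ℂ) * (1 - (Real.tanh (m * x) : ℂ) ^ 2))) x := by
    have hsq : HasDerivAt (fun y : ℝ => (Real.tanh (m * y) : ℂ) ^ 2)
        (2 * (Real.tanh (m * x) : ℂ) * ((m : ℂ) * (1 - (Real.tanh (m * x) : ℂ) ^ 2))) x := by
      have heq : (fun y : ℝ => (Real.tanh (m * y) : ℂ) ^ 2)
          = fun y : ℝ => (Real.tanh (m * y) : ℂ) * (Real.tanh (m * y) : ℂ) := by
        funext y; ring
      rw [heq]; exact (hT.mul hT).congr_deriv (by ring)
    have hcu : HasDerivAt (fun y : ℝ => (Real.tanh (m * y) : ℂ) ^ 3)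
        (3 * (Real.tanh (m * x) : ℂ) ^ 2 * ((m : ℂ) * (1 - (Real.tanh (m * x) : ℂ) ^ 2))) x := by
      have heq : (fun y : ℝ => (Real.tanh (m * y) : ℂ) ^ 3)
          = fun y : ℝ => (Real.tanh (m * y) : ℂ) ^ 2 * (Real.tanh (m * y) : ℂ) := by
        funext y; ring
      rw [heq]; exact (hsq.mul hT).congr_deriv (by ring)
    have h3 := hcu.const_mul a
    have h2 := hsq.const_mul b
    have h1 := hT.const_mul c
    have := ((h3.add h2).add h1).add_const d
    exact this.congr_deriv (by ring)
  have := hP.mul (hasDerivAt_expC k x)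
  exact this.congr_deriv (by ring)

/-- For every `k ∈ ℝ`, the generalized eigenfunction `E_k` satisfies
`−E_k'' + 4m²·E_k − 6m²·sech²(m x)·E_k = (k² + 4m²)·E_k` at every `x ∈ ℝ`. -/
theorem genEig_eigenfunction (m : ℝ) (hm : 0 < m) (k x : ℝ) :
    -(deriv (deriv (genEig m k)) x) + 4 * (m : ℂ) ^ 2 * genEig m k x
      - 6 * (m : ℂ) ^ 2 * (sech (m * x) : ℂ) ^ 2 * genEig m k x
      = ((k : ℂ) ^ 2 + 4 * (m : ℂ) ^ 2) * genEig m k x := by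
  set b : ℂ := 3 * (m : ℂ) ^ 2 with hb
  set c : ℂ := -(3 * Complex.I * (m : ℂ) * (k : ℂ)) with hc
  set d : ℂ := -((k : ℂ) ^ 2 + (m : ℂ) ^ 2) with hd
  set c0 : ℂ := cNorm m k / (((k : ℂ) ^ 2 + (m : ℂ) ^ 2) * ((k : ℂ) ^ 2 + 4 * (m : ℂ) ^ 2))
    with hc0
  -- first-derivative coefficients
  set a1 : ℂ := -(2 * b * m) with ha1
  set b1 : ℂ := -(c * m) + Complex.I * k * b with hb1
  set c1 : ℂ := 2 * b * m + Complex.I * k * c with hc1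
  set d1 : ℂ := c * m + Complex.I * k * d with hd1
  have hgen : genEig m k = fun y => c0 * cubWave m k 0 b c d y := by
    funext y
    simp only [genEig, cubWave, sech_sq_C]
    field_simp [hb, hc, hd, hc0]
    ring
  have hstep1 : ∀ y : ℝ, HasDerivAt (cubWave m k 0 b c d) (cubWave m k a1 b1 c1 d1 y) y := by
    intro y
    have := hasDerivAt_cubWave m k 0 b c d y
    convert this using 1
    simp only [cubWave]
    ring
  have h0 : ∀ y : ℝ, HasDerivAt (genEig m k) (c0 * cubWave m k a1 b1 c1 d1 y) y := by
    intro y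
    rw [hgen]
    exact (hstep1 y).const_mul c0
  have hD1 : deriv (genEig m k) = fun y => c0 * cubWave m k a1 b1 c1 d1 y :=
    funext fun y => (h0 y).deriv
  have h1 : HasDerivAt (fun y => c0 * cubWave m k a1 b1 c1 d1 y)
      (c0 * (((3 * a1 * (Real.tanh (m * x) : ℂ) ^ 2 + 2 * b1 * (Real.tanh (m * x) : ℂ) + c1)
          * ((m : ℂ) * (1 - (Real.tanh (m * x) : ℂ) ^ 2))
        + Complex.I * (k : ℂ) *
          (a1 * (Real.tanh (m * x) : ℂ) ^ 3 + b1 * (Real.tanh (m * x) : ℂ) ^ 2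
            + c1 * (Real.tanh (m * x) : ℂ) + d1))
        * Complex.exp (Complex.I * (k : ℂ) * (x : ℂ)))) x :=
    (hasDerivAt_cubWave m k a1 b1 c1 d1 x).const_mul c0
  have hD2 : deriv (deriv (genEig m k)) x
      = c0 * (((3 * a1 * (Real.tanh (m * x) : ℂ) ^ 2 + 2 * b1 * (Real.tanh (m * x) : ℂ) + c1)
          * ((m : ℂ) * (1 - (Real.tanh (m * x) : ℂ) ^ 2))
        + Complex.I * (k : ℂ) *
          (a1 * (Real.tanh (m * x) : ℂ) ^ 3 + b1 * (Real.tanh (m * x) : ℂ) ^ 2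
            + c1 * (Real.tanh (m * x) : ℂ) + d1))
        * Complex.exp (Complex.I * (k : ℂ) * (x : ℂ))) := by
    rw [hD1]
    exact h1.deriv
  rw [hD2]
  simp only [hgen, cubWave, sech_sq_C]
  simp only [ha1, hb1, hc1, hd1, hb, hc, hd]
  have hI3 : (Complex.I : ℂ) ^ 3 = -Complex.I := by
    rw [pow_succ, Complex.I_sq]; ring
  ring_nf
  simp only [Complex.I_sq, hI3]
  ring
end

section
/- The naive (unregularized) semiclassical mass shift integral evaluates as follows: the function (k,x) ↦ 9m⁴·sech²(m x)·(sech²(m x) − 1)/((k²+m²)·√(k²+4m²)) is Lebesgue integrable on ℝ², and √3·m + (1/(2π))·∬_{ℝ²} 9m⁴·sech²(m x)·(sech²(m x) − 1)/((k²+m²)·√(k²+4m²)) dk dx = m/√3. -/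
open MeasureTheory

section Aux
open Real Filter Set Topology

-- helper: integrability of even function from Ioi 0
lemma even_integrable {f : ℝ → ℝ} (hf : ∀ x, f (-x) = f x)
    (h : IntegrableOn f (Ioi 0)) : Integrable f := by
  have int_Iic : IntegrableOn f (Iic 0) := by
    rw [← Measure.map_neg_eq_self (volume : Measure ℝ)]
    have me : MeasurableEmbedding fun x : ℝ => -x := (Homeomorph.neg ℝ).measurableEmbedding
    rw [me.integrableOn_map_iff]
    simp_rw [Function.comp_def, hf, neg_preimage, neg_Iic, neg_zero]
    exact Iff.mpr integrableOn_Ici_iff_integrableOn_Ioi h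
  have := int_Iic.union h
  rwa [Iic_union_Ioi, integrableOn_univ] at this

lemma even_integral {f : ℝ → ℝ} (hf : ∀ x, f (-x) = f x) :
    ∫ x, f x = 2 * ∫ x in Ioi (0:ℝ), f x := by
  rw [← integral_comp_abs (f := f)]
  congr 1; funext x
  rcases le_or_gt 0 x with h | h
  · rw [abs_of_nonneg h]
  · rw [abs_of_neg h, hf]

lemma phi_deriv (m : ℝ) (hm : 0 < m) (k : ℝ) :
    HasDerivAt (fun k : ℝ => (Real.sqrt 3 * m ^ 2)⁻¹ *
        Real.arctan (Real.sqrt 3 * k / Real.sqrt (k ^ 2 + 4 * m ^ 2)))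
      (((k ^ 2 + m ^ 2) * Real.sqrt (k ^ 2 + 4 * m ^ 2))⁻¹) k := by
  have hA2 : (0:ℝ) < k ^ 2 + 4 * m ^ 2 := by positivity
  have hA : 0 < Real.sqrt (k ^ 2 + 4 * m ^ 2) := Real.sqrt_pos.2 hA2
  have hAsq : Real.sqrt (k ^ 2 + 4 * m ^ 2) ^ 2 = k ^ 2 + 4 * m ^ 2 := Real.sq_sqrt hA2.le
  set A := Real.sqrt (k ^ 2 + 4 * m ^ 2) with hAdef
  have hA3 : A ^ 3 = (k ^ 2 + 4 * m ^ 2) * A := by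
    rw [pow_succ, hAsq]
  have hsqrt : HasDerivAt (fun k : ℝ => Real.sqrt (k ^ 2 + 4 * m ^ 2)) (k / A) k := by
    have h1 : HasDerivAt (fun k : ℝ => k ^ 2 + 4 * m ^ 2) (2 * k) k := by
      simpa using ((hasDerivAt_pow 2 k).add_const (4 * m ^ 2))
    have := (Real.hasDerivAt_sqrt hA2.ne').comp k h1
    refine this.congr_deriv (Eq.symm ?_)
    rw [← hAdef]; field_simp
  have hg : HasDerivAt (fun k : ℝ => Real.sqrt 3 * k / Real.sqrt (k ^ 2 + 4 * m ^ 2))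
      (4 * Real.sqrt 3 * m ^ 2 / A ^ 3) k := by
    have hnum : HasDerivAt (fun k : ℝ => Real.sqrt 3 * k) (Real.sqrt 3) k := by
      simpa using (hasDerivAt_id k).const_mul (Real.sqrt 3)
    have hdiv := hnum.div hsqrt hA.ne'
    refine hdiv.congr_deriv (Eq.symm ?_)
    have hk2 : Real.sqrt 3 * A - Real.sqrt 3 * k * (k / A) = Real.sqrt 3 * (4 * m ^ 2) / A := by
      field_simp
      linear_combination hAsq
    rw [hk2, hA3]
    field_simp
    ring
    exact Real.sq_sqrt (by positivity)
  have harctan := (Real.hasDerivAt_arctan (Real.sqrt 3 * k / Real.sqrt (k ^ 2 + 4 * m ^ 2))).comp k hg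
  have hfin := harctan.const_mul ((Real.sqrt 3 * m ^ 2)⁻¹)
  refine hfin.congr_deriv (Eq.symm ?_)
  have h3 : Real.sqrt 3 ^ 2 = 3 := Real.sq_sqrt (by norm_num)
  have h30 : (0:ℝ) < Real.sqrt 3 := by positivity
  have hkm : (0:ℝ) < k ^ 2 + m ^ 2 := by positivity
  have h1g : 1 + (Real.sqrt 3 * k / A) ^ 2 = 4 * (k ^ 2 + m ^ 2) / (k ^ 2 + 4 * m ^ 2) := by
    rw [div_pow, mul_pow, h3, hAsq]
    field_simp
    ring
  rw [h1g, hA3]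
  field_simp

lemma phi_tendsto (m : ℝ) (hm : 0 < m) :
    Tendsto (fun k : ℝ => (Real.sqrt 3 * m ^ 2)⁻¹ *
        Real.arctan (Real.sqrt 3 * k / Real.sqrt (k ^ 2 + 4 * m ^ 2)))
      atTop (𝓝 ((Real.sqrt 3 * m ^ 2)⁻¹ * (Real.pi / 3))) := by
  have harg : Tendsto (fun k : ℝ => Real.sqrt 3 * k / Real.sqrt (k ^ 2 + 4 * m ^ 2))
      atTop (𝓝 (Real.sqrt 3)) := by
    have h1 : Tendsto (fun k : ℝ => 4 * m ^ 2 / k ^ 2) atTop (𝓝 0) := by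
      apply Tendsto.div_atTop tendsto_const_nhds
      exact tendsto_pow_atTop (by norm_num) |>.comp tendsto_id |>.congr (fun x => rfl)
    have h2 : Tendsto (fun k : ℝ => Real.sqrt 3 / Real.sqrt (1 + 4 * m ^ 2 / k ^ 2))
        atTop (𝓝 (Real.sqrt 3)) := by
      have : Tendsto (fun k : ℝ => Real.sqrt (1 + 4 * m ^ 2 / k ^ 2)) atTop (𝓝 1) := by
        have hadd : Tendsto (fun k : ℝ => 1 + 4 * m ^ 2 / k ^ 2) atTop (𝓝 1) := by
          simpa using (tendsto_const_nhds (x := (1:ℝ)) (f := atTop)).add h1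
        have := (Real.continuous_sqrt.tendsto 1).comp hadd
        rw [Real.sqrt_one] at this
        exact this
      have h' := (tendsto_const_nhds (x := Real.sqrt 3) (f := atTop)).div this one_ne_zero
      rw [div_one] at h'
      exact h'
    apply h2.congr'
    filter_upwards [eventually_gt_atTop (0:ℝ)] with k hk
    have hA : Real.sqrt (k ^ 2 + 4 * m ^ 2) = k * Real.sqrt (1 + 4 * m ^ 2 / k ^ 2) := by
      rw [← Real.sqrt_sq hk.le, ← Real.sqrt_mul (sq_nonneg k)]
      rw [Real.sqrt_sq hk.le]
      congr 1
      field_simp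
    rw [hA, mul_comm k, mul_div_mul_right _ _ hk.ne']
  have harct : Tendsto (fun k : ℝ => Real.arctan (Real.sqrt 3 * k / Real.sqrt (k ^ 2 + 4 * m ^ 2)))
      atTop (𝓝 (Real.arctan (Real.sqrt 3))) :=
    (Real.continuous_arctan.tendsto (Real.sqrt 3)).comp harg
  have := (tendsto_const_nhds (x := (Real.sqrt 3 * m ^ 2)⁻¹) (f := atTop)).mul harct
  convert this using 2
  rw [← Real.tan_pi_div_three, Real.arctan_tan]
  · linarith [Real.pi_pos]
  · linarith [Real.pi_pos]

lemma F_int (m : ℝ) (hm : 0 < m) :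
    IntegrableOn (fun k : ℝ => ((k ^ 2 + m ^ 2) * Real.sqrt (k ^ 2 + 4 * m ^ 2))⁻¹) (Ioi 0) ∧
    ∫ k in Ioi (0:ℝ), ((k ^ 2 + m ^ 2) * Real.sqrt (k ^ 2 + 4 * m ^ 2))⁻¹
      = (Real.sqrt 3 * m ^ 2)⁻¹ * (Real.pi / 3) := by
  have hderiv := fun k (_ : k ∈ Ici (0:ℝ)) => phi_deriv m hm k
  have hpos : ∀ k ∈ Ioi (0:ℝ), 0 ≤ ((k ^ 2 + m ^ 2) * Real.sqrt (k ^ 2 + 4 * m ^ 2))⁻¹ :=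
    fun k _ => by positivity
  refine ⟨integrableOn_Ioi_deriv_of_nonneg' hderiv hpos (phi_tendsto m hm), ?_⟩
  rw [integral_Ioi_of_hasDerivAt_of_nonneg' hderiv hpos (phi_tendsto m hm)]
  simp

lemma tanh_deriv (x : ℝ) :
    HasDerivAt (fun x : ℝ => Real.sinh x / Real.cosh x) (1 / Real.cosh x ^ 2) x := by
  have h := (Real.hasDerivAt_sinh x).div (Real.hasDerivAt_cosh x) (Real.cosh_pos x).ne'
  refine h.congr_deriv (Eq.symm ?_)
  have := Real.cosh_sq_sub_sinh_sq x
  field_simp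
  linarith

lemma psi_deriv (m : ℝ) (hm : 0 < m) (x : ℝ) :
    HasDerivAt (fun x : ℝ => -3 * m ^ 3 * (Real.sinh (m * x) / Real.cosh (m * x)) ^ 3)
      (9 * m ^ 4 * (sech (m * x)) ^ 2 * ((sech (m * x)) ^ 2 - 1)) x := by
  have hc := Real.cosh_pos (m * x)
  have ht : HasDerivAt (fun x : ℝ => Real.sinh (m * x) / Real.cosh (m * x))
      (m / Real.cosh (m * x) ^ 2) x := by
    have hmx : HasDerivAt (fun x : ℝ => m * x) m x := by
      simpa using (hasDerivAt_id x).const_mul m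
    have := (tanh_deriv (m * x)).comp x hmx
    refine this.congr_deriv (Eq.symm ?_)
    ring
  have hcube := ((ht.pow 3).const_mul (-3 * m ^ 3))
  refine hcube.congr_deriv (Eq.symm ?_)
  have hsq := Real.cosh_sq_sub_sinh_sq (m * x)
  simp only [sech]
  field_simp
  ring_nf
  field_simp
  linear_combination (-1) * hsq

lemma psi_tendsto (m : ℝ) (hm : 0 < m) :
    Tendsto (fun x : ℝ => -3 * m ^ 3 * (Real.sinh (m * x) / Real.cosh (m * x)) ^ 3)
      atTop (𝓝 (-3 * m ^ 3)) := by
  have htanh : Tendsto (fun x : ℝ => Real.sinh x / Real.cosh x) atTop (𝓝 1) := by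
    have heq : ∀ x : ℝ, Real.sinh x / Real.cosh x
        = (1 - Real.exp (-(2 * x))) / (1 + Real.exp (-(2 * x))) := by
      intro x
      rw [Real.sinh_eq, Real.cosh_eq]
      have h1 : Real.exp x ≠ 0 := (Real.exp_pos x).ne'
      have h2 : Real.exp (-(2 * x)) = Real.exp (-x) * Real.exp (-x) := by
        rw [← Real.exp_add]; ring_nf
      have h3 : Real.exp (-x) = (Real.exp x)⁻¹ := Real.exp_neg x
      rw [h2, h3]
      have hden : (0:ℝ) < Real.exp x + Real.exp (-x) := by positivity
      field_simp
    have he : Tendsto (fun x : ℝ => Real.exp (-(2 * x))) atTop (𝓝 0) := by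
      exact Real.tendsto_exp_neg_atTop_nhds_zero.comp
        (tendsto_id.const_mul_atTop (by norm_num : (0:ℝ) < 2))
    have hnum : Tendsto (fun x : ℝ => 1 - Real.exp (-(2 * x))) atTop (𝓝 1) := by
      simpa using (tendsto_const_nhds (x := (1:ℝ)) (f := atTop)).sub he
    have hden : Tendsto (fun x : ℝ => 1 + Real.exp (-(2 * x))) atTop (𝓝 1) := by
      simpa using (tendsto_const_nhds (x := (1:ℝ)) (f := atTop)).add he
    have := hnum.div hden (by norm_num)
    simp only [div_one] at this
    exact this.congr (fun x => (heq x).symm)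
  have hmx : Tendsto (fun x : ℝ => m * x) atTop atTop :=
    tendsto_id.const_mul_atTop hm
  have := ((htanh.comp hmx).pow 3).const_mul (-3 * m ^ 3)
  simpa using this

lemma G_int (m : ℝ) (hm : 0 < m) :
    IntegrableOn (fun x : ℝ => 9 * m ^ 4 * (sech (m * x)) ^ 2 * ((sech (m * x)) ^ 2 - 1)) (Ioi 0) ∧
    ∫ x in Ioi (0:ℝ), 9 * m ^ 4 * (sech (m * x)) ^ 2 * ((sech (m * x)) ^ 2 - 1)
      = -3 * m ^ 3 := by
  have hderiv := fun x (_ : x ∈ Ici (0:ℝ)) => psi_deriv m hm x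
  have hneg : ∀ x ∈ Ioi (0:ℝ), 9 * m ^ 4 * (sech (m * x)) ^ 2 * ((sech (m * x)) ^ 2 - 1) ≤ 0 := by
    intro x _
    have hc := Real.cosh_pos (m * x)
    have h1 : (sech (m * x)) ^ 2 ≤ 1 := by
      have : 1 ≤ Real.cosh (m * x) := Real.one_le_cosh (m * x)
      simp only [sech]
      rw [div_pow, one_pow, div_le_one (by positivity)]
      nlinarith
    have h2 : 0 ≤ 9 * m ^ 4 * (sech (m * x)) ^ 2 := by positivity
    nlinarith
  refine ⟨integrableOn_Ioi_deriv_of_nonpos' hderiv hneg (psi_tendsto m hm), ?_⟩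
  rw [integral_Ioi_of_hasDerivAt_of_nonpos' hderiv hneg (psi_tendsto m hm)]
  simp

end Aux

section Main
open Real Filter Set Topology

/-- The naive (unregularized) semiclassical mass shift integral: the integrand is
Lebesgue integrable on `ℝ²` and
`√3·m + (1/(2π))·∬ 9m⁴·sech²(m x)·(sech²(m x) − 1)/((k²+m²)·√(k²+4m²)) dk dx = m/√3`,
where `√3·m` is the contribution of the discrete eigenvalue `3m²` of the linearized
operator `K = −∂²_x + 4m² − 6m²·sech²(m x)`. -/
theorem naive_mass_shift (m : ℝ) (hm : 0 < m) :
    Integrable (fun p : ℝ × ℝ =>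
      9 * m ^ 4 * (sech (m * p.2)) ^ 2 * ((sech (m * p.2)) ^ 2 - 1) /
        ((p.1 ^ 2 + m ^ 2) * Real.sqrt (p.1 ^ 2 + 4 * m ^ 2))) ∧
    Real.sqrt 3 * m + (1 / (2 * Real.pi)) *
        ∫ p : ℝ × ℝ,
          9 * m ^ 4 * (sech (m * p.2)) ^ 2 * ((sech (m * p.2)) ^ 2 - 1) /
            ((p.1 ^ 2 + m ^ 2) * Real.sqrt (p.1 ^ 2 + 4 * m ^ 2))
      = m / Real.sqrt 3 := by
  set F : ℝ → ℝ := fun k => ((k ^ 2 + m ^ 2) * Real.sqrt (k ^ 2 + 4 * m ^ 2))⁻¹ with hF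
  set G : ℝ → ℝ := fun x => 9 * m ^ 4 * (sech (m * x)) ^ 2 * ((sech (m * x)) ^ 2 - 1) with hG
  have hFeven : ∀ k : ℝ, F (-k) = F k := by intro k; simp [hF]
  have hGeven : ∀ x : ℝ, G (-x) = G x := by
    intro x; simp only [hG, sech, mul_neg, Real.cosh_neg]
  have hFfull : Integrable F := even_integrable hFeven (F_int m hm).1
  have hGfull : Integrable G := even_integrable hGeven (G_int m hm).1
  have hFval : ∫ k, F k = 2 * ((Real.sqrt 3 * m ^ 2)⁻¹ * (Real.pi / 3)) := by
    rw [even_integral hFeven, (F_int m hm).2]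
  have hGval : ∫ x, G x = 2 * (-3 * m ^ 3) := by
    rw [even_integral hGeven, (G_int m hm).2]
  have hfun : (fun p : ℝ × ℝ =>
      9 * m ^ 4 * (sech (m * p.2)) ^ 2 * ((sech (m * p.2)) ^ 2 - 1) /
        ((p.1 ^ 2 + m ^ 2) * Real.sqrt (p.1 ^ 2 + 4 * m ^ 2)))
      = fun p : ℝ × ℝ => F p.1 * G p.2 := by
    funext p
    simp only [hF, hG]
    rw [div_eq_mul_inv, mul_comm]
  constructor
  · rw [hfun, Measure.volume_eq_prod]
    exact hFfull.mul_prod hGfull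
  · rw [hfun, Measure.volume_eq_prod, integral_prod_mul, hFval, hGval]
    have h3 : Real.sqrt 3 * Real.sqrt 3 = 3 := Real.mul_self_sqrt (by norm_num)
    have h30 : Real.sqrt 3 ≠ 0 := by positivity
    have hpi : Real.pi ≠ 0 := Real.pi_ne_zero
    field_simp
    linear_combination h3

end Main
end

section
/- For all m > 0, g > 0 and δ > 0 there exist constants C₁ > 0 and C₂ > 0 such that for every x ∈ ℝ, every γ ≥ 0, every real b with b ≥ δ·sech²(m x), and every φ ∈ ℝ: −3m²·sech²(m x)·(φ² − γ) + 2mg·b·tanh(m x)·(φ³ − 3γ·φ) + (g²/2)·b·(φ⁴ − 6γ·φ² + 3γ²) ≥ −C₁·b − C₂·b·γ². Moreover C₁ and C₂ can be chosen so that g²·C₁ and g²·C₂ remain bounded for 0 < g ≤ 1. -/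
lemma tanh_sq_le_one (y : ℝ) : (Real.tanh y) ^ 2 ≤ 1 := by
  have hc := Real.cosh_pos y
  rw [Real.tanh_eq_sinh_div_cosh, div_pow, div_le_one (by positivity)]
  nlinarith [Real.cosh_sq_sub_sinh_sq y]

set_option maxHeartbeats 2000000

/-- Pointwise lower bound for the Wick-ordered soliton-sector interaction density:
for all `m > 0` and `δ > 0` there exist constants `C₁(g) > 0`, `C₂(g) > 0` such that
for every `g > 0`, every `x ∈ ℝ`, every Wick constant `γ ≥ 0`, every spatial cutoff
`b ≥ δ·sech²(m x)` and every field value `φ ∈ ℝ`,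
`−3m²·sech²(m x)·(φ² − γ) + 2mg·b·tanh(m x)·(φ³ − 3γφ) + (g²/2)·b·(φ⁴ − 6γφ² + 3γ²)
  ≥ −C₁(g)·b − C₂(g)·b·γ²`;
moreover `C₁, C₂` can be chosen with `g²·C₁(g)` and `g²·C₂(g)` bounded for `0 < g ≤ 1`. -/
theorem interaction_density_lower_bound (m δ : ℝ) (hm : 0 < m) (hδ : 0 < δ) :
    ∃ C₁ C₂ : ℝ → ℝ,
      (∀ g : ℝ, 0 < g →
        0 < C₁ g ∧ 0 < C₂ g ∧
        ∀ x γ b φ : ℝ, 0 ≤ γ → δ * (sech (m * x)) ^ 2 ≤ b →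
          -(3 * m ^ 2) * (sech (m * x)) ^ 2 * (φ ^ 2 - γ)
            + 2 * m * g * b * Real.tanh (m * x) * (φ ^ 3 - 3 * γ * φ)
            + (g ^ 2 / 2) * b * (φ ^ 4 - 6 * γ * φ ^ 2 + 3 * γ ^ 2)
          ≥ -(C₁ g) * b - C₂ g * b * γ ^ 2) ∧
      ∃ B : ℝ, ∀ g : ℝ, 0 < g → g ≤ 1 →
        g ^ 2 * C₁ g ≤ B ∧ g ^ 2 * C₂ g ≤ B := by
  refine ⟨fun g => 2 * (3 * m ^ 2 / δ + 4 * m ^ 2 + g ^ 2 / 2) ^ 2 / g ^ 2,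
    fun g => 18 * m ^ 2 + 18 * g ^ 2, fun g hg => ?_,
    2 * (3 * m ^ 2 / δ + 4 * m ^ 2 + 1 / 2) ^ 2 + 18 * m ^ 2 + 18,
    fun g hg hg1 => ?_⟩
  · have hA : 0 < 3 * m ^ 2 / δ + 4 * m ^ 2 + g ^ 2 / 2 := by positivity
    refine ⟨by positivity, by positivity, fun x γ b φ hγ hb => ?_⟩
    set s : ℝ := sech (m * x) with hsdef
    set t : ℝ := Real.tanh (m * x) with htdef
    have hs : 0 < s := by
      have := Real.cosh_pos (m * x); simp only [hsdef, sech]; positivity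
    have hbpos : 0 < b := lt_of_lt_of_le (by positivity) hb
    have ht2 : t ^ 2 ≤ 1 := tanh_sq_le_one (m * x)
    have ht : |t| ≤ 1 := by nlinarith [sq_abs t, abs_nonneg t]
    -- main chain
    set a : ℝ := |φ| with hadef
    have ha : 0 ≤ a := abs_nonneg φ
    have ha2 : a ^ 2 = φ ^ 2 := sq_abs φ
    have htabs : |t| ≤ 1 := ht
    have h3 : -(a ^ 3) ≤ t * φ ^ 3 := by
      have h := neg_abs_le (t * φ ^ 3)
      have : |t * φ ^ 3| ≤ a ^ 3 := by
        rw [abs_mul, abs_pow]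
        calc |t| * |φ| ^ 3 ≤ 1 * a ^ 3 := by
              apply mul_le_mul htabs le_rfl (by positivity) zero_le_one
          _ = a ^ 3 := one_mul _
      linarith
    have h1 : t * φ ≤ a := by
      have : |t * φ| ≤ a := by
        rw [abs_mul]
        calc |t| * |φ| ≤ 1 * a := mul_le_mul htabs le_rfl (abs_nonneg φ) zero_le_one
          _ = a := one_mul _
      exact le_trans (le_abs_self _) this
    -- Step 1: lower bound by b * G'
    have hstep1 :
        -(3 * m ^ 2) * s ^ 2 * (φ ^ 2 - γ)
          + 2 * m * g * b * t * (φ ^ 3 - 3 * γ * φ)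
          + (g ^ 2 / 2) * b * (φ ^ 4 - 6 * γ * φ ^ 2 + 3 * γ ^ 2)
        ≥ b * (-(3 * m ^ 2 / δ) * a ^ 2 - 2 * m * g * a ^ 3 - 6 * m * g * γ * a
            + (g ^ 2 / 2) * (a ^ 4 - 6 * γ * a ^ 2 + 3 * γ ^ 2)) := by
      have hs2 : s ^ 2 ≤ b / δ := by
        rw [le_div_iff₀ hδ]; linarith [hb]
      have e1 : -(3 * m ^ 2) * s ^ 2 * (φ ^ 2 - γ) ≥ -(3 * m ^ 2 / δ) * b * a ^ 2 := by
        have h1' : -(3 * m ^ 2) * s ^ 2 * φ ^ 2 ≥ -(3 * m ^ 2 / δ) * b * a ^ 2 := by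
          rw [← ha2]
          have hD : (0:ℝ) ≤ 3 * m ^ 2 / δ := by positivity
          have hmul := mul_le_mul_of_nonneg_left hb hD
          have hId : (3 * m ^ 2 / δ) * (δ * s ^ 2) = 3 * m ^ 2 * s ^ 2 := by
            field_simp
          rw [hId] at hmul
          nlinarith [mul_le_mul_of_nonneg_right hmul (sq_nonneg a)]
        nlinarith [mul_nonneg (mul_nonneg (by positivity : (0:ℝ) ≤ 3 * m ^ 2) (sq_nonneg s)) hγ]
      have e2 : 2 * m * g * b * t * (φ ^ 3 - 3 * γ * φ)
          ≥ b * (-2 * m * g * a ^ 3 - 6 * m * g * γ * a) := by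
        have k1 : 2 * m * g * b * (t * φ ^ 3) ≥ 2 * m * g * b * (-(a ^ 3)) :=
          mul_le_mul_of_nonneg_left h3 (by positivity)
        have k2 : 2 * m * g * b * (3 * γ * (t * φ)) ≤ 2 * m * g * b * (3 * γ * a) := by
          apply mul_le_mul_of_nonneg_left _ (by positivity)
          exact mul_le_mul_of_nonneg_left h1 (by positivity)
        linarith
      have e3 : (g ^ 2 / 2) * b * (φ ^ 4 - 6 * γ * φ ^ 2 + 3 * γ ^ 2)
          = b * ((g ^ 2 / 2) * (a ^ 4 - 6 * γ * a ^ 2 + 3 * γ ^ 2)) := by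
        have : a ^ 4 = φ ^ 4 := by rw [hadef]; rw [← abs_pow]; exact abs_of_nonneg (by positivity)
        rw [this, ha2]; ring
      linarith
    -- Step 2: pointwise bound on G'
    have hg2 : (0:ℝ) < g ^ 2 := by positivity
    have hfin : (g ^ 2 / 8) * a ^ 4 - (3 * m ^ 2 / δ + 4 * m ^ 2 + g ^ 2 / 2) * a ^ 2 + 2 * (3 * m ^ 2 / δ + 4 * m ^ 2 + g ^ 2 / 2) ^ 2 / g ^ 2 ≥ 0 := by
      have heq : (g ^ 2 / 8) * a ^ 4 - (3 * m ^ 2 / δ + 4 * m ^ 2 + g ^ 2 / 2) * a ^ 2 + 2 * (3 * m ^ 2 / δ + 4 * m ^ 2 + g ^ 2 / 2) ^ 2 / g ^ 2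
          = (g ^ 2 * a ^ 2 - 4 * (3 * m ^ 2 / δ + 4 * m ^ 2 + g ^ 2 / 2)) ^ 2 / (8 * g ^ 2) := by
        field_simp; ring
      rw [heq]; positivity
    have hstep2 : -(3 * m ^ 2 / δ) * a ^ 2 - 2 * m * g * a ^ 3 - 6 * m * g * γ * a
            + (g ^ 2 / 2) * (a ^ 4 - 6 * γ * a ^ 2 + 3 * γ ^ 2)
        ≥ -(2 * (3 * m ^ 2 / δ + 4 * m ^ 2 + g ^ 2 / 2) ^ 2 / g ^ 2) - (18 * m ^ 2 + 18 * g ^ 2) * γ ^ 2 := by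
      linarith [sq_nonneg (g * a ^ 2 - 4 * m * a), sq_nonneg (g * a - 6 * m * γ),
        mul_nonneg (sq_nonneg g) (sq_nonneg (a ^ 2 - 12 * γ)), hfin,
        mul_nonneg (sq_nonneg g) (sq_nonneg γ)]
    have hmul := mul_le_mul_of_nonneg_left hstep2 (le_of_lt hbpos)
    linarith [hstep1, hmul]
  · constructor
    · have hA1 : 3 * m ^ 2 / δ + 4 * m ^ 2 + g ^ 2 / 2 ≤ 3 * m ^ 2 / δ + 4 * m ^ 2 + 1 / 2 := by
        nlinarith
      have hApos : (0:ℝ) < 3 * m ^ 2 / δ + 4 * m ^ 2 + g ^ 2 / 2 := by positivity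
      have : g ^ 2 * (2 * (3 * m ^ 2 / δ + 4 * m ^ 2 + g ^ 2 / 2) ^ 2 / g ^ 2)
          = 2 * (3 * m ^ 2 / δ + 4 * m ^ 2 + g ^ 2 / 2) ^ 2 := by
        field_simp
      rw [this]
      have h2 : (3 * m ^ 2 / δ + 4 * m ^ 2 + g ^ 2 / 2) ^ 2
          ≤ (3 * m ^ 2 / δ + 4 * m ^ 2 + 1 / 2) ^ 2 := by nlinarith [hApos]
      nlinarith [sq_nonneg m, h2]
    · have hgsq : g ^ 2 ≤ 1 := by nlinarith
      nlinarith [sq_nonneg (3 * m ^ 2 / δ + 4 * m ^ 2 + 1 / 2),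
        mul_nonneg (sq_nonneg m) (by linarith : (0:ℝ) ≤ 1 - g ^ 2),
        mul_nonneg (sq_nonneg g) (by linarith : (0:ℝ) ≤ 1 - g ^ 2)]
end
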